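/- arXiv:2003.14271 — 4 statements merged into one kernel-verified Lean document; each statement's English description precedes it below -/
import Mathlib

section
/- If two transactions tx and tx' are apart, then for any sequence of transactions B, the sequences B;tx;tx' and B;tx';tx are observationally equivalent, i.e., they have the same set of unspent outputs. -/
/-- Idealised EUTxO: positions, redeemers, datums are naturals; values are
multisets of chips (pairs of naturals), modelled as functions to ℕ. -/
abbrev Position := ℕ
abbrev Redeemer := ℕ
abbrev Datum := ℕ
abbrev Value := ℕ × ℕ → ℕ

/-- An input is a pair of a position and a redeemer. -/
structure Input where
  pos : Position
  redeemer : Redeemer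

/-- An output is a tuple (position, validator, datum, value).  Since validators
are sets of tuples mentioning contexts (which mention outputs), we break the
type-level recursion by abstracting the type `V` of validators together with a
validation relation `val : V → Redeemer → Datum → Value → Context V → Prop`. -/
structure Output (V : Type) where
  pos : Position
  validator : V
  datum : Datum
  value : Value

/-- A transaction is a (finite) set of inputs and a (finite) set of outputs. -/
structure Tx (V : Type) where
  inputs : List Input
  outputs : List (Output V)

/-- A context is a transaction pointed at one of its inputs. -/
structure Context (V : Type) where
  tx : Tx V
  point : Input

variable {V : Type}

/-- All outputs appearing in a sequence of transactions. -/
def outputsOf (B : List (Tx V)) : List (Output V) := B.flatMap Tx.outputs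

/-- A sequence of transactions is a valid blockchain when:
(1) distinct outputs appearing in it have distinct positions;
(2) every input points to (has the position of) a unique output in a strictly
    earlier transaction;
(3) each pointing input satisfies the validator of the output it points to. -/
def Valid (val : V → Redeemer → Datum → Value → Context V → Prop)
    (B : List (Tx V)) : Prop :=
  (outputsOf B).Pairwise (fun o o' => o.pos ≠ o'.pos) ∧
  (∀ n (hn : n < B.length), ∀ i ∈ B[n].inputs,
    ∃! o : Output V, o ∈ outputsOf (B.take n) ∧ o.pos = i.pos) ∧
  (∀ n (hn : n < B.length), ∀ i ∈ B[n].inputs, ∀ o ∈ outputsOf (B.take n),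
    o.pos = i.pos →
    val o.validator i.redeemer o.datum o.value ⟨B[n], i⟩)

/-- The unspent outputs of a sequence of transactions: outputs to which no
input of a strictly later transaction points. -/
def UTxO (B : List (Tx V)) : Set (Output V) :=
  { o | ∃ m, ∃ hm : m < B.length, o ∈ B[m].outputs ∧
        ∀ n, ∀ hn : n < B.length, m < n → ∀ i ∈ B[n].inputs, i.pos ≠ o.pos }

/-- A transaction mentions a position when it occurs in one of its inputs or
outputs. -/
def Mentions (tx : Tx V) (p : Position) : Prop :=
  (∃ i ∈ tx.inputs, i.pos = p) ∨ (∃ o ∈ tx.outputs, o.pos = p)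

/-- Two transactions are apart when they mention disjoint sets of positions. -/
def Apart (tx tx' : Tx V) : Prop := ∀ p, Mentions tx p → ¬ Mentions tx' p

/-! Appending a transaction `t` updates the unspent outputs by `U ↦ (U \ t.consumes) ∪ t.outputs`.
Two such updates commute as soon as neither transaction consumes an output of the other, and
apartness rules that out, since a consumed output shares its position with the consuming input. -/

def Tx.consumes (t : Tx V) : Set (Output V) := {o | ∃ i ∈ t.inputs, i.pos = o.pos}

theorem utxo_append_singleton (B : List (Tx V)) (t : Tx V) :
    UTxO (B ++ [t]) = UTxO B \ t.consumes ∪ {o | o ∈ t.outputs} := by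
  ext o
  simp only [UTxO, Tx.consumes, Set.mem_union, Set.mem_sdiff, Set.mem_ofPred_eq,
    List.length_append, List.length_singleton]
  constructor
  · rintro ⟨m, hm, ho, hunspent⟩
    rcases Nat.lt_succ_iff_lt_or_eq.1 hm with hmB | rfl
    · rw [List.getElem_append_left hmB] at ho
      refine .inl ⟨⟨m, hmB, ho, fun n hn hmn i hi => ?_⟩, fun ⟨i, hi, hpos⟩ => ?_⟩
      · exact hunspent n (by omega) hmn i (by rwa [List.getElem_append_left hn])
      · exact hunspent B.length (by omega) hmB i (by simpa using hi) hpos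
    · exact .inr (by simpa using ho)
  · rintro (⟨⟨m, hm, ho, hunspent⟩, hfresh⟩ | ho)
    · refine ⟨m, by omega, by rwa [List.getElem_append_left hm], fun n hn hmn i hi hpos => ?_⟩
      rcases Nat.lt_succ_iff_lt_or_eq.1 hn with hnB | rfl
      · exact hunspent n hnB hmn i (by rwa [List.getElem_append_left hnB] at hi) hpos
      · exact hfresh ⟨i, by simpa using hi, hpos⟩
    · exact ⟨B.length, by omega, by simpa using ho, fun n hn hmn => absurd hn (by omega)⟩

theorem utxo_append_pair (B : List (Tx V)) (tx tx' : Tx V)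
    (h : Disjoint {o | o ∈ tx.outputs} tx'.consumes) :
    UTxO (B ++ [tx, tx']) =
      (UTxO B \ tx.consumes) \ tx'.consumes ∪ {o | o ∈ tx.outputs} ∪ {o | o ∈ tx'.outputs} := by
  rw [show B ++ [tx, tx'] = B ++ [tx] ++ [tx'] by simp, utxo_append_singleton,
    utxo_append_singleton, Set.union_sdiff_distrib, h.sdiff_eq_left]

theorem Apart.symm {tx tx' : Tx V} (h : Apart tx tx') : Apart tx' tx :=
  fun p hp hp' => h p hp' hp

theorem Apart.disjoint_outputs_consumes {tx tx' : Tx V} (h : Apart tx' tx) :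
    Disjoint {o | o ∈ tx.outputs} tx'.consumes :=
  Set.disjoint_left.2 fun o ho ⟨i, hi, hpos⟩ =>
    h o.pos (Or.inl ⟨i, hi, hpos⟩) (Or.inr ⟨o, ho, rfl⟩)

/-- Apart transactions commute up to observational equivalence. -/
theorem utxo_swap_of_apart (B : List (Tx V)) (tx tx' : Tx V) (h : Apart tx tx') :
    UTxO (B ++ [tx, tx']) = UTxO (B ++ [tx', tx]) := by
  rw [utxo_append_pair B tx tx' h.symm.disjoint_outputs_consumes,
    utxo_append_pair B tx' tx h.disjoint_outputs_consumes, Set.sdiff_sdiff_comm,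
    Set.union_right_comm]
end

section
/- (Stateless UTxO theorem, validity part) If B;txs;tx is a valid blockchain and B;tx is a valid blockchain, then B;tx;txs is a valid blockchain. -/
variable {V : Type}

section

variable {val : V → Redeemer → Datum → Value → Context V → Prop}

def ValidInput (val : V → Redeemer → Datum → Value → Context V → Prop)
    (L : List (Output V)) (tx : Tx V) (i : Input) : Prop :=
  (∃! o : Output V, o ∈ L ∧ o.pos = i.pos) ∧
  ∀ o ∈ L, o.pos = i.pos → val o.validator i.redeemer o.datum o.value ⟨tx, i⟩

theorem ValidInput.mono {L L' : List (Output V)} {tx : Tx V} {i : Input}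
    (h : ValidInput val L tx i) (hsub : L ⊆ L') (hnew : ∀ o ∈ L', o.pos = i.pos → o ∈ L) :
    ValidInput val L' tx i := by
  obtain ⟨⟨o, ⟨hoL, hop⟩, huniq⟩, hval⟩ := h
  exact ⟨⟨o, ⟨hsub hoL, hop⟩, fun o' ⟨ho', hp⟩ => huniq o' ⟨hnew o' ho' hp, hp⟩⟩,
    fun o' ho' hp => hval o' (hnew o' ho' hp) hp⟩

@[simp]
theorem outputsOf_append (A C : List (Tx V)) :
    outputsOf (A ++ C) = outputsOf A ++ outputsOf C := List.flatMap_append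

@[simp]
theorem outputsOf_singleton (tx : Tx V) : outputsOf [tx] = tx.outputs :=
  List.flatMap_singleton _ _

theorem valid_iff {B : List (Tx V)} :
    Valid val B ↔ (outputsOf B).Pairwise (fun o o' => o.pos ≠ o'.pos) ∧
      ∀ n (hn : n < B.length), ∀ i ∈ B[n].inputs,
        ValidInput val (outputsOf (B.take n)) B[n] i := by
  simp only [Valid, ValidInput, forall_and]

theorem valid_append_singleton {C : List (Tx V)} {tx : Tx V} :
    Valid val (C ++ [tx]) ↔ Valid val C ∧
      (outputsOf (C ++ [tx])).Pairwise (fun o o' => o.pos ≠ o'.pos) ∧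
      ∀ i ∈ tx.inputs, ValidInput val (outputsOf C) tx i := by
  simp only [valid_iff]
  constructor
  · rintro ⟨hpw, hin⟩
    refine ⟨⟨hpw.sublist (by simp), fun n hn i hi => ?_⟩, hpw, fun i hi => ?_⟩
    · have hget : (C ++ [tx])[n]'(by simp; omega) = C[n] := List.getElem_append_left hn
      have := hin n (by simp; omega) i (hget ▸ hi)
      rwa [hget, List.take_append_of_le_length hn.le] at this
    · simpa using hin C.length (by simp) i (by simpa using hi)
  · rintro ⟨⟨-, hC⟩, hpw, htx⟩
    refine ⟨hpw, fun n hn i hi => ?_⟩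
    obtain hn | rfl : n < C.length ∨ n = C.length := by simp at hn; omega
    · have hget : (C ++ [tx])[n] = C[n] := List.getElem_append_left hn
      rw [hget, List.take_append_of_le_length hn.le]
      exact hC n hn i (hget ▸ hi)
    · simpa using htx i (by simpa using hi)

theorem valid_append_singleton_append {B C : List (Tx V)} {tx : Tx V}
    (htx : Valid val (B ++ [tx])) (hC : Valid val (B ++ C))
    (hfresh : (outputsOf (B ++ C ++ [tx])).Pairwise (fun o o' => o.pos ≠ o'.pos)) :
    Valid val (B ++ [tx] ++ C) := by
  induction C using List.reverseRecOn with
  | nil => simpa using htx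
  | append_singleton C t ih =>
    rw [← List.append_assoc] at hC hfresh
    obtain ⟨hBC, -, ht⟩ := valid_append_singleton.mp hC
    have hfresh' : (outputsOf (B ++ C ++ [tx])).Pairwise (fun o o' => o.pos ≠ o'.pos) :=
      hfresh.sublist <| by
        simpa only [outputsOf_append, outputsOf_singleton] using
          ((outputsOf (B ++ C)).sublist_append_left t.outputs).append_right tx.outputs
    have htx_apart : ∀ o ∈ outputsOf (B ++ C), ∀ o' ∈ tx.outputs, o.pos ≠ o'.pos := by
      have h := hfresh'
      rw [outputsOf_append (B ++ C), outputsOf_singleton, List.pairwise_append] at h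
      exact h.2.2
    rw [← List.append_assoc]
    refine valid_append_singleton.mpr
      ⟨ih hBC hfresh', hfresh.perm ?_ Ne.symm, fun i hi => (ht i hi).mono ?_ ?_⟩
    · simpa only [outputsOf_append, outputsOf_singleton, List.append_assoc] using
        (List.perm_append_comm (l₁ := outputsOf C ++ t.outputs)).append_left (outputsOf B)
    · intro o; simp only [outputsOf_append, List.mem_append]; tauto
    · intro o ho hop
      simp only [outputsOf_append, outputsOf_singleton, List.mem_append] at ho ⊢
      rcases ho with (ho | ho) | ho
      · exact Or.inl ho
      · obtain ⟨o₀, ⟨ho₀, hp₀⟩, -⟩ := (ht i hi).1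
        exact absurd (hp₀.trans hop.symm) (htx_apart o₀ ho₀ o ho)
      · exact Or.inr ho

end

/-- Stateless UTxO theorem, validity part: if `B;txs;tx` and `B;tx` are valid
blockchains then so is `B;tx;txs`. -/
theorem valid_commute (val : V → Redeemer → Datum → Value → Context V → Prop)
    (B txs : List (Tx V)) (tx : Tx V)
    (h1 : Valid val (B ++ txs ++ [tx])) (h2 : Valid val (B ++ [tx])) :
    Valid val (B ++ [tx] ++ txs) :=
  valid_append_singleton_append h2 (valid_append_singleton.mp h1).1 h1.1
end

section
/- If B and B' are observationally equivalent sequences of transactions, B;tx is a valid blockchain, and B';tx is a valid blockchain, then B;tx and B';tx are observationally equivalent. -/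
variable {V : Type}

theorem List.forall_lt_length_append_singleton {α : Type*} {l : List α} {a : α}
    {P : ℕ → α → Prop} :
    (∀ n (hn : n < (l ++ [a]).length), P n (l ++ [a])[n]) ↔
      (∀ n (hn : n < l.length), P n l[n]) ∧ P l.length a := by
  simp only [List.length_append, List.length_singleton, Nat.lt_succ_iff_lt_or_eq]
  constructor
  · intro h
    refine ⟨fun n hn => ?_, ?_⟩
    · simpa [List.getElem_append_left hn] using h n (.inl hn)
    · simpa using h l.length (.inr rfl)
  · rintro ⟨h, ha⟩ n (hn | rfl)
    · simpa [List.getElem_append_left hn] using h n hn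
    · simpa using ha

theorem List.exists_lt_length_append_singleton {α : Type*} {l : List α} {a : α}
    {P : ℕ → α → Prop} :
    (∃ n, ∃ hn : n < (l ++ [a]).length, P n (l ++ [a])[n]) ↔
      (∃ n, ∃ hn : n < l.length, P n l[n]) ∨ P l.length a := by
  simp only [List.length_append, List.length_singleton, Nat.lt_succ_iff_lt_or_eq]
  constructor
  · rintro ⟨n, hn | rfl, h⟩
    · exact .inl ⟨n, hn, by simpa [List.getElem_append_left hn] using h⟩
    · exact .inr (by simpa using h)
  · rintro (⟨n, hn, h⟩ | h)
    · exact ⟨n, .inl hn, by simpa [List.getElem_append_left hn] using h⟩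
    · exact ⟨l.length, .inr rfl, by simpa using h⟩

theorem mem_UTxO_append_singleton {B : List (Tx V)} {tx : Tx V} {o : Output V} :
    o ∈ UTxO (B ++ [tx]) ↔
      (o ∈ UTxO B ∧ ∀ i ∈ tx.inputs, i.pos ≠ o.pos) ∨ o ∈ tx.outputs := by
  have unspent_iff : ∀ m < B.length,
      (∀ n (hn : n < (B ++ [tx]).length), m < n → ∀ i ∈ (B ++ [tx])[n].inputs, i.pos ≠ o.pos) ↔
        (∀ n (hn : n < B.length), m < n → ∀ i ∈ B[n].inputs, i.pos ≠ o.pos) ∧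
          ∀ i ∈ tx.inputs, i.pos ≠ o.pos := fun m hm => by
    rw [List.forall_lt_length_append_singleton (P := fun n (t : Tx V) =>
      m < n → ∀ i ∈ t.inputs, i.pos ≠ o.pos)]
    simp only [hm, true_implies]
  simp only [UTxO, Set.mem_ofPred_eq]
  rw [List.exists_lt_length_append_singleton (P := fun m (t : Tx V) => o ∈ t.outputs ∧
    ∀ n (hn : n < (B ++ [tx]).length), m < n → ∀ i ∈ (B ++ [tx])[n].inputs, i.pos ≠ o.pos)]
  refine or_congr ?_ (and_iff_left fun n hn hlt => absurd hn (by
    simp only [List.length_append, List.length_singleton]; omega))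
  simp +contextual only [unspent_iff, ← and_assoc, exists_and_right]

theorem obsEq_append_general (B B' : List (Tx V)) (tx : Tx V)
    (he : UTxO B = UTxO B') :
    UTxO (B ++ [tx]) = UTxO (B' ++ [tx]) := by
  ext o
  simp only [mem_UTxO_append_singleton, he]

/-- Observational equivalence is preserved by appending a transaction that
validly extends both blockchains. -/
theorem obsEq_append (val : V → Redeemer → Datum → Value → Context V → Prop)
    (B B' : List (Tx V)) (tx : Tx V)
    (he : UTxO B = UTxO B')
    (h : Valid val (B ++ [tx])) (h' : Valid val (B' ++ [tx])) :
    UTxO (B ++ [tx]) = UTxO (B' ++ [tx]) :=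
  obsEq_append_general B B' tx he
end

section
/- Alpha-equivalent valid blockchains are observationally equivalent: if B' is obtained from a valid blockchain B by a permutation of positions fixing the positions of all unspent outputs of B, then B and B' have the same set of unspent outputs. -/
variable {V : Type}

/-- The action of a position-renaming on a transaction. -/
def mapTx (f : Position → Position) (tx : Tx V) : Tx V :=
  ⟨tx.inputs.map (fun i => ⟨f i.pos, i.redeemer⟩),
   tx.outputs.map (fun o => ⟨f o.pos, o.validator, o.datum, o.value⟩)⟩

/-! Injective renaming commutes with spending: an input spends an output exactly when
their renamed positions agree. So the unspent outputs of the renamed chain are the renamed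
unspent outputs, and a renaming fixing their positions fixes each of them. -/

def Output.rename (f : Position → Position) (o : Output V) : Output V :=
  ⟨f o.pos, o.validator, o.datum, o.value⟩

theorem Output.rename_pos (f : Position → Position) (o : Output V) :
    (o.rename f).pos = f o.pos := rfl

theorem Output.rename_eq_self {f : Position → Position} {o : Output V} (h : f o.pos = o.pos) :
    o.rename f = o := by
  simp [Output.rename, h]

theorem mem_mapTx_inputs {f : Position → Position} {tx : Tx V} {i : Input} :
    i ∈ (mapTx f tx).inputs ↔ ∃ i₀ ∈ tx.inputs, i = ⟨f i₀.pos, i₀.redeemer⟩ := by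
  simp [mapTx, eq_comm]

theorem mem_mapTx_outputs {f : Position → Position} {tx : Tx V} {o : Output V} :
    o ∈ (mapTx f tx).outputs ↔ ∃ o₀ ∈ tx.outputs, o = o₀.rename f := by
  simp [mapTx, Output.rename, eq_comm]

theorem UTxO_map_mapTx {f : Position → Position} (hf : Function.Injective f) (B : List (Tx V)) :
    UTxO (B.map (mapTx f)) = Output.rename f '' UTxO B := by
  ext o
  simp only [UTxO, Set.mem_image, Set.mem_ofPred, List.length_map, List.getElem_map,
    mem_mapTx_inputs, mem_mapTx_outputs]
  constructor
  · rintro ⟨m, hm, ⟨o₀, ho₀, rfl⟩, hunspent⟩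
    refine ⟨o₀, ⟨m, hm, ho₀, fun n hn hmn i₀ hi₀ hpos => ?_⟩, rfl⟩
    exact hunspent n hn hmn _ ⟨i₀, hi₀, rfl⟩ (by rw [Output.rename_pos, ← hpos])
  · rintro ⟨o₀, ⟨m, hm, ho₀, hunspent⟩, rfl⟩
    refine ⟨m, hm, ⟨o₀, ho₀, rfl⟩, ?_⟩
    rintro n hn hmn _ ⟨i₀, hi₀, rfl⟩ hpos
    exact hunspent n hn hmn i₀ hi₀ (hf hpos)

theorem utxo_map_perm_general
    (B : List (Tx V)) (π : Equiv.Perm Position)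
    (hfix : ∀ o ∈ UTxO B, π o.pos = o.pos) :
    UTxO (B.map (mapTx ⇑π)) = UTxO B := by
  calc UTxO (B.map (mapTx ⇑π)) = Output.rename π '' UTxO B := UTxO_map_mapTx π.injective B
    _ = id '' UTxO B := Set.image_congr fun o ho => Output.rename_eq_self (hfix o ho)
    _ = UTxO B := Set.image_id _

/-- Alpha-equivalent valid blockchains are observationally equivalent: renaming
positions by a permutation fixing all unspent-output positions of a valid
blockchain `B` preserves its UTxO set. -/
theorem utxo_map_perm (val : V → Redeemer → Datum → Value → Context V → Prop)
    (B : List (Tx V)) (h : Valid val B) (π : Equiv.Perm Position)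
    (hfix : ∀ o ∈ UTxO B, π o.pos = o.pos) :
    UTxO (B.map (mapTx ⇑π)) = UTxO B :=
  utxo_map_perm_general B π hfix
end
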